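/- arXiv:1308.2459 — 9 statements merged into one kernel-verified Lean document; each statement's English description precedes it below -/
import Mathlib

section
/- Every Boyd-Wong admissible function φ ∈ F(re)(ℝ₊) is Meir-Keeler admissible: if Λ⁺φ(s) < s for all s > 0, then for each γ > 0 there exists β ∈ (0,γ) such that γ ≤ t < γ+β implies φ(t) ≤ γ. -/
open Filter Topology

namespace Paper

/-- `φ ∈ F(re)(ℝ₊)`: `φ : ℝ₊ → ℝ₊` with `φ(0) = 0` and `φ(t) < t` for `t > 0`. -/
def Regressive (φ : ℝ → ℝ) : Prop :=
  φ 0 = 0 ∧ (∀ t, 0 ≤ t → 0 ≤ φ t) ∧ (∀ t, 0 < t → φ t < t)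

/-- `φ` is Meir-Keeler admissible. -/
def MKAdmissible (φ : ℝ → ℝ) : Prop :=
  ∀ γ : ℝ, 0 < γ → ∃ β : ℝ, 0 < β ∧ β < γ ∧ ∀ t, γ ≤ t → t < γ + β → φ t ≤ γ

/-- `Λ₊φ(s) = inf_{ε>0} sup φ(]s, s+ε[)`. -/
noncomputable def LambdaSub (φ : ℝ → ℝ) (s : ℝ) : ℝ :=
  sInf {y | ∃ ε : ℝ, 0 < ε ∧ y = sSup (φ '' Set.Ioo s (s + ε))}

/-- `Λ⁺φ(s) = inf_{ε>0} sup φ([s, s+ε[)`. -/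
noncomputable def LambdaPlus (φ : ℝ → ℝ) (s : ℝ) : ℝ :=
  sInf {y | ∃ ε : ℝ, 0 < ε ∧ y = sSup (φ '' Set.Ico s (s + ε))}

/-- every Boyd-Wong admissible `φ ∈ F(re)(ℝ₊)` is Meir-Keeler admissible. -/
theorem mkAdmissible_of_boydWong (φ : ℝ → ℝ) (hφ : Regressive φ)
    (hBW : ∀ s : ℝ, 0 < s → LambdaPlus φ s < s) :
    MKAdmissible φ := by
  obtain ⟨h0, hpos, hlt⟩ := hφ
  intro γ hγ
  have hne : {y | ∃ ε : ℝ, 0 < ε ∧ y = sSup (φ '' Set.Ico γ (γ + ε))}.Nonempty :=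
    ⟨_, 1, one_pos, rfl⟩
  have := hBW γ hγ
  obtain ⟨y, ⟨ε, hε, rfl⟩, hy⟩ := exists_lt_of_csInf_lt hne this
  refine ⟨min ε (γ / 2), lt_min hε (by linarith), (min_le_right _ _).trans_lt (by linarith),
    fun t ht ht' => ?_⟩
  have htmem : t ∈ Set.Ico γ (γ + ε) :=
    ⟨ht, ht'.trans_le (by have := min_le_left ε (γ / 2); linarith)⟩
  have hbdd : BddAbove (φ '' Set.Ico γ (γ + ε)) := by
    refine ⟨γ + ε, ?_⟩
    rintro _ ⟨u, ⟨hu1, hu2⟩, rfl⟩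
    exact (hlt u (hγ.trans_le hu1)).le.trans hu2.le
  exact (le_csSup hbdd ⟨t, htmem, rfl⟩).trans hy.le

end Paper
end

section
/- Every Matkowski admissible function φ ∈ F(re)(ℝ₊) is Meir-Keeler admissible: if φ is increasing and φⁿ(t) → 0 as n → ∞ for every t > 0, then for each γ > 0 there exists β ∈ (0,γ) such that γ ≤ t < γ+β implies φ(t) ≤ γ. -/
open Filter Topology

namespace Paper

/-- every Matkowski admissible `φ ∈ F(re)(ℝ₊)` is Meir-Keeler admissible. -/
theorem mkAdmissible_of_matkowski (φ : ℝ → ℝ) (hφ : Regressive φ)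
    (hmono : ∀ s t : ℝ, 0 ≤ s → s ≤ t → φ s ≤ φ t)
    (hiter : ∀ t : ℝ, 0 < t → Filter.Tendsto (fun n => φ^[n] t) Filter.atTop (nhds 0)) :
    MKAdmissible φ := by
  intro γ hγ
  by_contra h
  push_neg at h
  -- From failure for every β, deduce φ s > γ for all s > γ.
  have key : ∀ s : ℝ, γ < s → γ < φ s := by
    intro s hs
    set β := min (s - γ) (γ / 2) with hβdef
    have hβpos : 0 < β := lt_min (by linarith) (by linarith)
    have hβlt : β < γ := lt_of_le_of_lt (min_le_right _ _) (by linarith)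
    obtain ⟨t, ht1, ht2, ht3⟩ := h β hβpos hβlt
    have hts : t ≤ s := by
      have : β ≤ s - γ := min_le_left _ _
      linarith
    exact lt_of_lt_of_le ht3 (hmono t s (le_trans hγ.le ht1) hts)
  -- Iterates of γ+1 stay above γ.
  have hiterpos : ∀ n : ℕ, γ < φ^[n] (γ + 1) := by
    intro n
    induction n with
    | zero => simpa using by linarith
    | succ n ih =>
      rw [Function.iterate_succ_apply']
      exact key _ ih
  have htend := hiter (γ + 1) (by linarith)
  have := (htend.eventually (eventually_lt_nhds hγ)).exists
  obtain ⟨n, hn⟩ := this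
  exact absurd (hiterpos n) (not_lt.mpr hn.le)

end Paper
end

section
/- Let (X,d) be a metric space, R a relation on X, T : X → X, and G ∈ 𝒢. If T is (d,R;G,(ψ,φ))-contractive for some pair (ψ,φ) of weak generalized altering functions in F(ℝ₊), then T is Meir-Keeler (d,R;G)-contractive; that is, (i) x R̃ y implies d(Tx,Ty) < G(x,y), and (ii) for every ε > 0 there exists δ > 0 such that x R̃ y and ε < G(x,y) < ε+δ imply d(Tx,Ty) ≤ ε. -/
/-!
Since `ψ` is increasing, `φ t > ψ t - ψ (t - 0) ≥ 0` for `t > 0`, so `ψ s ≤ ψ t - φ t` forces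
`s < t`; as `d ≤ G` for every `G ∈ 𝒢`, `G x y > 0` when `x ≠ y`. If the Meir-Keeler condition
failed at `ε`, there would be `t_n ↓ ε` and `s_n > ε` with `ψ s_n ≤ ψ t_n - φ t_n`, hence
`φ t_n ≤ ψ t_n - ψ ε → ψ (ε + 0) - ψ ε`, contradicting the `limsup` condition on `(ψ, φ)`.
-/

open Filter Topology

namespace Paper

variable {X : Type*} [MetricSpace X]

/-- `A₁(x,y) = d(x,y)`. -/
noncomputable def A1 (T : X → X) (x y : X) : ℝ := dist x y

/-- `A₂(x,y) = (1/2)[d(x,Tx) + d(y,Ty)]`. -/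
noncomputable def A2 (T : X → X) (x y : X) : ℝ := (dist x (T x) + dist y (T y)) / 2

/-- `A₃(x,y) = max{d(x,Tx), d(y,Ty)}`. -/
noncomputable def A3 (T : X → X) (x y : X) : ℝ := max (dist x (T x)) (dist y (T y))

/-- `A₄(x,y) = (1/2)[d(x,Ty) + d(Tx,y)]`. -/
noncomputable def A4 (T : X → X) (x y : X) : ℝ := (dist x (T y) + dist (T x) y) / 2

/-- `B₁(x,y) = diam{x, Tx, y, Ty}`. -/
noncomputable def B1 (T : X → X) (x y : X) : ℝ := Metric.diam ({x, T x, y, T y} : Set X)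

noncomputable def B2 (T : X → X) (x y : X) : ℝ := max (A1 T x y) (A2 T x y)
noncomputable def B3 (T : X → X) (x y : X) : ℝ := max (A1 T x y) (A3 T x y)
noncomputable def B4 (T : X → X) (x y : X) : ℝ := max (A1 T x y) (A4 T x y)
noncomputable def C1 (T : X → X) (x y : X) : ℝ := max (A1 T x y) (max (A2 T x y) (A4 T x y))
noncomputable def C2 (T : X → X) (x y : X) : ℝ := max (A1 T x y) (max (A3 T x y) (A4 T x y))

/-- The class `𝒢 = {A₁, B₂, B₃, B₄, C₁, C₂}`. -/
noncomputable def calG (T : X → X) : Set (X → X → ℝ) :=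
  {A1 T, B2 T, B3 T, B4 T, C1 T, C2 T}

/-- The class `𝒢₁ = {A₁, B₂, B₄, C₁}`. -/
noncomputable def calG1 (T : X → X) : Set (X → X → ℝ) :=
  {A1 T, B2 T, B4 T, C1 T}

/-- `T` is strictly `(d,R;G)`-nonexpansive: `x R̃ y` implies `d(Tx,Ty) < G(x,y)`. -/
def StrictlyNonexpansive (R : X → X → Prop) (T : X → X) (G : X → X → ℝ) : Prop :=
  ∀ x y, R x y → x ≠ y → dist (T x) (T y) < G x y

/-- `T` is Meir-Keeler `(d,R;G)`-contractive. -/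
def MeirKeelerContractive (R : X → X → Prop) (T : X → X) (G : X → X → ℝ) : Prop :=
  StrictlyNonexpansive R T G ∧
  ∀ ε : ℝ, 0 < ε → ∃ δ : ℝ, 0 < δ ∧
    ∀ x y, R x y → x ≠ y → ε < G x y → G x y < ε + δ → dist (T x) (T y) ≤ ε

/-- `T` is `(d,R;G,φ)`-contractive. -/
def PhiContractive (R : X → X → Prop) (T : X → X) (G : X → X → ℝ) (φ : ℝ → ℝ) : Prop :=
  ∀ x y, R x y → x ≠ y → dist (T x) (T y) ≤ φ (G x y)

/-- `(ψ,φ)` is a pair of weak generalized altering functions in `F(ℝ₊)`. -/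
def WeakAlteringPair (ψ φ : ℝ → ℝ) : Prop :=
  (∀ s t, 0 ≤ s → s ≤ t → ψ s ≤ ψ t) ∧
  (∀ t, 0 ≤ t → 0 ≤ ψ t) ∧ (∀ t, 0 ≤ t → 0 ≤ φ t) ∧
  φ 0 = 0 ∧
  (∀ ε : ℝ, 0 < ε → ψ ε - Function.leftLim ψ ε < φ ε) ∧
  (∀ ε : ℝ, 0 < ε → ∀ t : ℕ → ℝ,
    Tendsto t atTop (nhds ε) → (∀ᶠ n in atTop, ε < t n) →
    Function.rightLim ψ ε - ψ ε < Filter.limsup (fun n => φ (t n)) atTop)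

/-- `T` is `(d,R;G,(ψ,φ))`-contractive. -/
def PsiPhiContractive (R : X → X → Prop) (T : X → X) (G : X → X → ℝ) (ψ φ : ℝ → ℝ) : Prop :=
  ∀ x y, R x y → x ≠ y → ψ (dist (T x) (T y)) ≤ ψ (G x y) - φ (G x y)

/-- `(z_n)` is `R`-ascending. -/
def Ascending (R : X → X → Prop) (z : ℕ → X) : Prop := ∀ n, R (z n) (z (n + 1))

/-- `(z_n)` is `T`-orbital: a subsequence of `(Tⁿ x)` for some `x`. -/
def Orbital (T : X → X) (z : ℕ → X) : Prop :=
  ∃ x : X, ∃ i : ℕ → ℕ, Tendsto i atTop atTop ∧ ∀ n, z n = T^[i n] x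

/-- `X` is `(a-o,d)`-complete. -/
def AOComplete (R : X → X → Prop) (T : X → X) : Prop :=
  ∀ z : ℕ → X, Ascending R z → Orbital T z → CauchySeq z → ∃ l, Tendsto z atTop (nhds l)

/-- `T` is `(a-o,d)`-continuous. -/
def AOContinuous (R : X → X → Prop) (T : X → X) : Prop :=
  ∀ z : ℕ → X, ∀ l : X, Ascending R z → Orbital T z → Tendsto z atTop (nhds l) →
    Tendsto (fun n => T (z n)) atTop (nhds (T l))

/-- `R` is `(a-o,d)`-almost-selfclosed. -/
def AlmostSelfClosed (R : X → X → Prop) (T : X → X) : Prop :=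
  ∀ z : ℕ → X, ∀ l : X, Ascending R z → Orbital T z → Tendsto z atTop (nhds l) →
    ∃ i : ℕ → ℕ, Tendsto i atTop atTop ∧ ∀ n, R (z (i n)) l

/-- the spectrum `spec(x) = {i ≥ 1 : x R Tⁱx}`. -/
def spec (R : X → X → Prop) (T : X → X) (x : X) : Set ℕ := {i | 1 ≤ i ∧ R x (T^[i] x)}

/-- `R` is `k`-semi-recurrent at `x`. -/
def SemiRecurrentAt (R : X → X → Prop) (T : X → X) (x : X) (k : ℕ) : Prop :=
  ∀ n : ℕ, 1 ≤ n → ∃ q ∈ spec R T x, q ≤ n ∧ n < q + k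

/-- `x` is orbital admissible. -/
def OrbAdmissible (T : X → X) (x : X) : Prop :=
  ∀ i j : ℕ, i ≠ j → T^[i] x ≠ T^[j] x

/-- `R` is finitely semi-recurrent. -/
def FinSemiRecurrent (R : X → X → Prop) (T : X → X) : Prop :=
  ∀ x : X, R x (T x) → OrbAdmissible T x → ∃ k : ℕ, 1 ≤ k ∧ SemiRecurrentAt R T x k

end Paper

section LeftRightLim

open Function Set

variable {α β : Type*} [LinearOrder α] [TopologicalSpace α] [OrderTopology α]
  [ConditionallyCompleteLinearOrder β] [TopologicalSpace β] [OrderTopology β]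
  {f : α → β} {a x : α}

theorem MonotoneOn.leftLim_le_of_lt (hf : MonotoneOn f (Ici a)) (hax : a < x) :
    leftLim f x ≤ f x := by
  rcases eq_or_neBot (𝓝[<] x) with hbot | hne
  · exact (leftLim_eq_of_eq_bot f hbot).le
  set g := IciExtend fun y : Ici a => f y
  have hg : Monotone g := (monotoneOn_iff_monotone.1 hf).IciExtend
  have hgf : g =ᶠ[𝓝[<] x] f := by
    filter_upwards [Ioo_mem_nhdsLT hax] with y hy
    exact IciExtend_of_mem _ hy.1.le
  calc leftLim f x = leftLim g x :=
        leftLim_eq_of_tendsto ((hg.tendsto_leftLim x).congr' hgf)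
    _ ≤ g x := hg.leftLim_le le_rfl
    _ = f x := IciExtend_of_mem _ hax.le

theorem MonotoneOn.tendsto_rightLim (hf : MonotoneOn f (Ici a)) (hax : a ≤ x) :
    Tendsto f (𝓝[>] x) (𝓝 (rightLim f x)) := by
  rcases eq_or_neBot (𝓝[>] x) with hbot | hne
  · simp [hbot]
  set g := IciExtend fun y : Ici a => f y
  have hg : Monotone g := (monotoneOn_iff_monotone.1 hf).IciExtend
  have hgf : g =ᶠ[𝓝[>] x] f := by
    filter_upwards [self_mem_nhdsWithin] with y (hy : x < y)
    exact IciExtend_of_mem _ (hax.trans hy.le)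
  have hlim : Tendsto f (𝓝[>] x) (𝓝 (rightLim g x)) := (hg.tendsto_rightLim x).congr' hgf
  rwa [rightLim_eq_of_tendsto hlim]

end LeftRightLim

namespace Paper

namespace WeakAlteringPair

open Function Set

variable {ψ φ : ℝ → ℝ}

theorem monotoneOn (h : WeakAlteringPair ψ φ) : MonotoneOn ψ (Ici 0) :=
  fun s hs t _ hst => h.1 s t hs hst

theorem lt_of_le_sub (h : WeakAlteringPair ψ φ) {s t : ℝ} (ht : 0 < t) (hs : 0 ≤ s)
    (hst : ψ s ≤ ψ t - φ t) : s < t := by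
  have hψ := h.monotoneOn
  obtain ⟨-, -, -, -, hjump, -⟩ := h
  by_contra! hts
  linarith [hjump t ht, hψ.leftLim_le_of_lt ht, hψ ht.le hs hts]

theorem limsup_le_rightLim_sub (h : WeakAlteringPair ψ φ) {ε : ℝ} (hε : 0 ≤ ε) {t : ℕ → ℝ}
    (ht : Tendsto t atTop (𝓝[>] ε)) (hle : ∀ n, φ (t n) ≤ ψ (t n) - ψ ε) :
    limsup (fun n => φ (t n)) atTop ≤ rightLim ψ ε - ψ ε := by
  have hlim : Tendsto (fun n => ψ (t n) - ψ ε) atTop (𝓝 (rightLim ψ ε - ψ ε)) :=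
    ((h.monotoneOn.tendsto_rightLim hε).comp ht).sub_const _
  have hnonneg : ∀ᶠ n in atTop, 0 ≤ φ (t n) := by
    filter_upwards [ht.eventually self_mem_nhdsWithin] with n (hn : ε < t n)
    obtain ⟨-, -, hφ, -⟩ := h
    exact hφ _ (hε.trans hn.le)
  calc limsup (fun n => φ (t n)) atTop ≤ limsup (fun n => ψ (t n) - ψ ε) atTop :=
        limsup_le_limsup (Eventually.of_forall hle)
          (isCoboundedUnder_le_of_eventually_le _ hnonneg) hlim.isBoundedUnder_le
    _ = rightLim ψ ε - ψ ε := hlim.limsup_eq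

theorem exists_forall_le_of_le_sub (h : WeakAlteringPair ψ φ) {ε : ℝ} (hε : 0 < ε) :
    ∃ δ, 0 < δ ∧ ∀ s t, ε < t → t < ε + δ → ψ s ≤ ψ t - φ t → s ≤ ε := by
  by_contra! hcon
  choose s t hεt htδ hst hεs using fun n : ℕ => hcon (1 / (n + 1)) Nat.one_div_pos_of_nat
  have hδ : Tendsto (fun n : ℕ => ε + 1 / (n + 1)) atTop (𝓝 ε) := by
    simpa using tendsto_one_div_add_atTop_nhds_zero_nat.const_add ε
  have ht : Tendsto t atTop (𝓝 ε) :=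
    tendsto_of_tendsto_of_tendsto_of_le_of_le tendsto_const_nhds hδ
      (fun n => (hεt n).le) (fun n => (htδ n).le)
  have hle : ∀ n, φ (t n) ≤ ψ (t n) - ψ ε := fun n => by
    have := h.monotoneOn hε.le (hε.le.trans (hεs n).le) (hεs n).le
    linarith [hst n]
  have hlimsup := h.limsup_le_rightLim_sub hε.le
    (tendsto_nhdsWithin_iff.2 ⟨ht, Eventually.of_forall hεt⟩) hle
  obtain ⟨-, -, -, -, -, hright⟩ := h
  exact hlimsup.not_gt (hright ε hε t ht (Eventually.of_forall hεt))

end WeakAlteringPair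

variable {X : Type*} [MetricSpace X]

theorem dist_le_of_mem_calG {T : X → X} {G : X → X → ℝ} (hG : G ∈ calG T) (x y : X) :
    dist x y ≤ G x y := by
  simp only [calG, Set.mem_insert_iff, Set.mem_singleton_iff] at hG
  rcases hG with rfl | rfl | rfl | rfl | rfl | rfl <;>
    simp only [A1, B2, B3, B4, C1, C2, le_refl, le_max_left]

/-- if `T` is `(d,R;G,(ψ,φ))`-contractive for a pair `(ψ,φ)` of weak
generalized altering functions, then `T` is Meir-Keeler `(d,R;G)`-contractive. -/
theorem meirKeeler_of_psiPhiContractive {X : Type*} [MetricSpace X]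
    (R : X → X → Prop) (T : X → X) (G : X → X → ℝ) (hG : G ∈ calG T)
    (ψ φ : ℝ → ℝ) (hpair : WeakAlteringPair ψ φ)
    (hcontr : PsiPhiContractive R T G ψ φ) :
    MeirKeelerContractive R T G := by
  refine ⟨fun x y hR hne => ?_, fun ε hε => ?_⟩
  · have hG_pos : 0 < G x y := (dist_pos.2 hne).trans_le (dist_le_of_mem_calG hG x y)
    exact hpair.lt_of_le_sub hG_pos dist_nonneg (hcontr x y hR hne)
  · obtain ⟨δ, hδ, hle⟩ := hpair.exists_forall_le_of_le_sub hε
    exact ⟨δ, hδ, fun x y hR hne hεG hGδ => hle _ _ hεG hGδ (hcontr x y hR hne)⟩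

end Paper
end

section
/- Let (X,d) be a metric space, R a finitely semi-recurrent, non-identical relation on X, and T : X → X an R-semi-progressive, R-increasing selfmap which is Meir-Keeler (d,R;G)-contractive for some G ∈ 𝒢. If X is (a-o,d)-complete and T is (a-o,d)-continuous, then T is a globally strong Picard operator (modulo (d,R)): for each x ∈ X(T,R) the sequence (Tⁿx) converges to a fixed point of T, and any two fixed points z₁, z₂ of T with z₁ R z₂ coincide. -/
open Filter Topology

namespace Paper

variable {X : Type*} [MetricSpace X]

lemma G_lower {T : X → X} {G : X → X → ℝ} (hG : G ∈ calG T) (x y : X) :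
    A1 T x y ≤ G x y := by
  simp only [calG, Set.mem_insert_iff, Set.mem_singleton_iff] at hG
  rcases hG with rfl | rfl | rfl | rfl | rfl | rfl
  · exact le_rfl
  all_goals exact le_max_left _ _

lemma G_upper {T : X → X} {G : X → X → ℝ} (hG : G ∈ calG T) (x y : X) :
    G x y ≤ max (A1 T x y) (max (A2 T x y) (max (A3 T x y) (A4 T x y))) := by
  have h1 : A1 T x y ≤ max (A1 T x y) (max (A2 T x y) (max (A3 T x y) (A4 T x y))) :=
    le_max_left _ _
  have h2 : A2 T x y ≤ max (A1 T x y) (max (A2 T x y) (max (A3 T x y) (A4 T x y))) :=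
    (le_max_left _ _).trans (le_max_right _ _)
  have h3 : A3 T x y ≤ max (A1 T x y) (max (A2 T x y) (max (A3 T x y) (A4 T x y))) :=
    ((le_max_left _ _).trans (le_max_right _ _)).trans (le_max_right _ _)
  have h4 : A4 T x y ≤ max (A1 T x y) (max (A2 T x y) (max (A3 T x y) (A4 T x y))) :=
    ((le_max_right _ _).trans (le_max_right _ _)).trans (le_max_right _ _)
  simp only [calG, Set.mem_insert_iff, Set.mem_singleton_iff] at hG
  rcases hG with rfl | rfl | rfl | rfl | rfl | rfl
  · exact h1
  · exact max_le h1 h2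
  · exact max_le h1 h3
  · exact max_le h1 h4
  · exact max_le h1 (max_le h2 h4)
  · exact max_le h1 (max_le h3 h4)

/-- main theorem, alternative (i): `T` Meir-Keeler `(d,R;G)`-contractive,
`X` `(a-o,d)`-complete, `T` `(a-o,d)`-continuous. -/
theorem globally_strong_picard_continuous {X : Type*} [MetricSpace X]
    (R : X → X → Prop) (T : X → X)
    (hni : ∃ x y : X, R x y ∧ x ≠ y)
    (hfsr : FinSemiRecurrent R T)
    (hsp : ∃ x : X, R x (T x))
    (hinc : ∀ x y : X, R x y → R (T x) (T y))
    (hcomp : AOComplete R T)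
    (G : X → X → ℝ) (hG : G ∈ calG T)
    (hMK : MeirKeelerContractive R T G)
    (hcont : AOContinuous R T) :
    (∀ x : X, R x (T x) →
      ∃ z : X, T z = z ∧ Tendsto (fun n => T^[n] x) atTop (nhds z)) ∧
    (∀ z₁ z₂ : X, T z₁ = z₁ → T z₂ = z₂ → R z₁ z₂ → z₁ = z₂) := by
  have hGlow : ∀ a b : X, A1 T a b ≤ G a b := fun a b => G_lower hG a b
  have hGup : ∀ a b : X, G a b ≤
      max (A1 T a b) (max (A2 T a b) (max (A3 T a b) (A4 T a b))) :=
    fun a b => G_upper hG a b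
  constructor
  · -- Picard part
    intro x hx
    have hR : ∀ n : ℕ, R (T^[n] x) (T^[n + 1] x) := by
      intro n
      induction n with
      | zero => simpa using hx
      | succ n ih =>
        have h := hinc _ _ ih
        rw [Function.iterate_succ_apply' T n x, Function.iterate_succ_apply' T (n + 1) x]
        exact h
    have horb : Orbital T (fun n => T^[n] x) := ⟨x, id, tendsto_id, fun n => rfl⟩
    by_cases hcons : ∀ n : ℕ, T^[n] x ≠ T^[n + 1] x
    swap
    · -- the orbit stabilizes
      push_neg at hcons
      obtain ⟨n, hn⟩ := hcons
      have hfix : T (T^[n] x) = T^[n] x := by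
        rw [← Function.iterate_succ_apply' T n x, ← hn]
      refine ⟨T^[n] x, hfix, ?_⟩
      have hconst : ∀ m, T^[n + m] x = T^[n] x := by
        intro m
        induction m with
        | zero => rfl
        | succ m ih =>
          have : n + (m + 1) = (n + m) + 1 := rfl
          rw [this, Function.iterate_succ_apply' T (n + m) x, ih, hfix]
      refine tendsto_atTop_of_eventually_const (i₀ := n) ?_
      intro i hi
      have := hconst (i - n)
      rwa [Nat.add_sub_cancel' hi] at this
    -- main case: all consecutive iterates distinct
    set ρ : ℕ → ℝ := fun n => dist (T^[n] x) (T^[n + 1] x) with hρ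
    have hρpos : ∀ n, 0 < ρ n := fun n => dist_pos.mpr (hcons n)
    have hρnn : ∀ n, 0 ≤ ρ n := fun n => (hρpos n).le
    have hGle : ∀ n, G (T^[n] x) (T^[n + 1] x) ≤ max (ρ n) (ρ (n + 1)) := by
      intro n
      have hTa : T (T^[n] x) = T^[n + 1] x := (Function.iterate_succ_apply' T n x).symm
      have hTb : T (T^[n + 1] x) = T^[n + 2] x :=
        (Function.iterate_succ_apply' T (n + 1) x).symm
      refine (hGup _ _).trans (max_le (le_max_left _ _) (max_le ?_ (max_le ?_ ?_)))
      · show (dist (T^[n] x) (T (T^[n] x)) + dist (T^[n + 1] x) (T (T^[n + 1] x))) / 2 ≤ _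
        rw [hTa, hTb]
        have h1 : ρ n ≤ max (ρ n) (ρ (n + 1)) := le_max_left _ _
        have h2 : ρ (n + 1) ≤ max (ρ n) (ρ (n + 1)) := le_max_right _ _
        have e1 : ρ n = dist (T^[n] x) (T^[n + 1] x) := rfl
        have e2 : ρ (n + 1) = dist (T^[n + 1] x) (T^[n + 2] x) := rfl
        rw [e1, e2] at h1 h2
        linarith
      · show max (dist (T^[n] x) (T (T^[n] x))) (dist (T^[n + 1] x) (T (T^[n + 1] x))) ≤ _
        rw [hTa, hTb]
      · show (dist (T^[n] x) (T (T^[n + 1] x)) + dist (T (T^[n] x)) (T^[n + 1] x)) / 2 ≤ _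
        rw [hTa, hTb]
        have htri : dist (T^[n] x) (T^[n + 2] x) ≤
            dist (T^[n] x) (T^[n + 1] x) + dist (T^[n + 1] x) (T^[n + 2] x) :=
          dist_triangle _ _ _
        have h1 : dist (T^[n] x) (T^[n + 1] x) ≤ max (ρ n) (ρ (n + 1)) := le_max_left _ _
        have h2 : dist (T^[n + 1] x) (T^[n + 2] x) ≤ max (ρ n) (ρ (n + 1)) := le_max_right _ _
        have h0 : dist (T^[n + 1] x) (T^[n + 1] x) = 0 := dist_self _
        rw [h0]
        linarith
    have hstep : ∀ n, ρ (n + 1) < ρ n := by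
      intro n
      have hlt : ρ (n + 1) < G (T^[n] x) (T^[n + 1] x) := by
        have h := hMK.1 _ _ (hR n) (hcons n)
        have e1 : T (T^[n] x) = T^[n + 1] x := (Function.iterate_succ_apply' T n x).symm
        have e2 : T (T^[n + 1] x) = T^[n + 1 + 1] x :=
          (Function.iterate_succ_apply' T (n + 1) x).symm
        rw [e1, e2] at h
        exact h
      rcases lt_max_iff.mp (hlt.trans_le (hGle n)) with h | h
      · exact h
      · exact absurd h (lt_irrefl _)
    have hGeq : ∀ n, G (T^[n] x) (T^[n + 1] x) = ρ n := by
      intro n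
      refine le_antisymm ((hGle n).trans_eq (max_eq_left (hstep n).le)) (hGlow _ _)
    have hanti : StrictAnti ρ := strictAnti_nat_of_succ_lt hstep
    have hbdd : BddBelow (Set.range ρ) := ⟨0, by rintro _ ⟨n, rfl⟩; exact hρnn n⟩
    have hinf_le : ∀ n, (⨅ m, ρ m) ≤ ρ n := fun n => ciInf_le hbdd n
    have hinf_nn : 0 ≤ ⨅ m, ρ m := le_ciInf fun n => hρnn n
    have hinf0 : (⨅ m, ρ m) = 0 := by
      by_contra h0
      have hpos : 0 < ⨅ m, ρ m := lt_of_le_of_ne hinf_nn (Ne.symm h0)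
      obtain ⟨δ, hδ, hMK2⟩ := hMK.2 _ hpos
      obtain ⟨n, hn⟩ := exists_lt_of_ciInf_lt (show (⨅ m, ρ m) < (⨅ m, ρ m) + δ by linarith)
      have h1 : (⨅ m, ρ m) < ρ n := lt_of_le_of_lt (hinf_le (n + 1)) (hstep n)
      have h2 : dist (T (T^[n] x)) (T (T^[n + 1] x)) ≤ ⨅ m, ρ m := by
        refine hMK2 _ _ (hR n) (hcons n) ?_ ?_
        · rw [hGeq n]; exact h1
        · rw [hGeq n]; exact hn
      have e1 : T (T^[n] x) = T^[n + 1] x := (Function.iterate_succ_apply' T n x).symm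
      have e2 : T (T^[n + 1] x) = T^[n + 1 + 1] x :=
        (Function.iterate_succ_apply' T (n + 1) x).symm
      rw [e1, e2] at h2
      have h3 : ρ (n + 1) = ⨅ m, ρ m := le_antisymm h2 (hinf_le (n + 1))
      have h4 := hstep (n + 1)
      have h5 := hinf_le (n + 2)
      rw [h3] at h4
      linarith
    have hsmall : ∀ c : ℝ, 0 < c → ∃ N, ∀ j, N ≤ j → ρ j < c := by
      intro c hc
      obtain ⟨n, hn⟩ := exists_lt_of_ciInf_lt (show (⨅ m, ρ m) < c by rw [hinf0]; exact hc)
      exact ⟨n, fun j hj => lt_of_le_of_lt (hanti.antitone hj) hn⟩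
    have hadm : OrbAdmissible T x := by
      have key : ∀ i j : ℕ, i < j → T^[i] x ≠ T^[j] x := by
        intro i j hij heq
        have hρeq : ρ i = ρ j := by
          show dist (T^[i] x) (T^[i + 1] x) = dist (T^[j] x) (T^[j + 1] x)
          rw [Function.iterate_succ_apply' T i x, Function.iterate_succ_apply' T j x, heq]
        exact absurd hρeq (ne_of_gt (hanti hij))
      intro i j hij
      rcases hij.lt_or_gt with h | h
      · exact key _ _ h
      · exact (key _ _ h).symm
    obtain ⟨k, hk1, hrec⟩ := hfsr x hx hadm
    have hRq : ∀ q, q ∈ spec R T x → ∀ i, R (T^[i] x) (T^[i + q] x) := by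
      intro q hq i
      induction i with
      | zero => simpa using hq.2
      | succ i ih =>
        have e : i + 1 + q = (i + q) + 1 := by omega
        rw [e, Function.iterate_succ_apply' T (i + q) x, Function.iterate_succ_apply' T i x]
        exact hinc _ _ ih
    have hcauchy : CauchySeq (fun n => T^[n] x) := by
      rw [Metric.cauchySeq_iff]
      intro ε hε
      set ε' := ε / 4 with hε'def
      have hε'pos : 0 < ε' := by positivity
      obtain ⟨δ₀, hδ₀, hMK2⟩ := hMK.2 ε' hε'pos
      set δ := min δ₀ ε' with hδdef
      have hδpos : 0 < δ := lt_min hδ₀ hε'pos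
      have hδle : δ ≤ ε' := min_le_right _ _
      have hδle₀ : δ ≤ δ₀ := min_le_left _ _
      have hk1' : (0:ℝ) < (k:ℝ) + 1 := by positivity
      set c := δ / (2 * ((k:ℝ) + 1)) with hcdef
      have hcpos : 0 < c := by positivity
      obtain ⟨N, hN⟩ := hsmall c hcpos
      have hδc : 2 * ((k:ℝ) + 1) * c = δ := by
        rw [hcdef]
        field_simp
      have hknn : (0:ℝ) ≤ (k:ℝ) := Nat.cast_nonneg k
      have hck : (k:ℝ) * c ≤ δ / 2 := by nlinarith [hcpos.le]
      have hc2 : c ≤ δ / 2 := by nlinarith [mul_nonneg hknn hcpos.le]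
      have hchain : ∀ a, N ≤ a → ∀ m : ℕ, dist (T^[a] x) (T^[a + m] x) ≤ (m:ℝ) * c := by
        intro a ha m
        induction m with
        | zero => simp
        | succ m ih =>
          have h1 : dist (T^[a + m] x) (T^[a + m + 1] x) ≤ c := (hN (a + m) (by omega)).le
          have htri : dist (T^[a] x) (T^[a + (m + 1)] x) ≤
              dist (T^[a] x) (T^[a + m] x) + dist (T^[a + m] x) (T^[a + m + 1] x) := by
            have e : a + (m + 1) = a + m + 1 := rfl
            rw [e]
            exact dist_triangle _ _ _
          push_cast
          nlinarith [ih]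
      have main : ∀ n : ℕ, dist (T^[N] x) (T^[N + n] x) ≤ ε' + δ / 2 := by
        intro n
        induction n using Nat.strong_induction_on with
        | _ n ih =>
        rcases Nat.lt_or_ge n 2 with hn2 | hn2
        · interval_cases n
          · simp; positivity
          · have h1 : ρ N < c := hN N le_rfl
            have e : ρ N = dist (T^[N] x) (T^[N + 1] x) := rfl
            rw [e] at h1
            linarith
        · obtain ⟨q, hqspec, hqle, hqlt⟩ := hrec (n - 1) (by omega)
          have hq1 : 1 ≤ q := hqspec.1
          have hqn : q < n := by omega
          have hnqk : n ≤ q + k := by omega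
          have ihq : dist (T^[N] x) (T^[N + q] x) ≤ ε' + δ / 2 := ih q hqn
          have hρN : ρ N < c := hN N le_rfl
          have hρNq : ρ (N + q) < c := hN (N + q) (by omega)
          have eρN : ρ N = dist (T^[N] x) (T^[N + 1] x) := rfl
          have eρNq : ρ (N + q) = dist (T^[N + q] x) (T^[N + q + 1] x) := rfl
          rw [eρN] at hρN
          rw [eρNq] at hρNq
          have hTa : T (T^[N] x) = T^[N + 1] x := (Function.iterate_succ_apply' T N x).symm
          have hTb : T (T^[N + q] x) = T^[N + q + 1] x :=
            (Function.iterate_succ_apply' T (N + q) x).symm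
          have hGb : G (T^[N] x) (T^[N + q] x) < ε' + δ := by
            refine (hGup _ _).trans_lt (max_lt ?_ (max_lt ?_ (max_lt ?_ ?_)))
            · show dist (T^[N] x) (T^[N + q] x) < ε' + δ
              linarith
            · show (dist (T^[N] x) (T (T^[N] x)) + dist (T^[N + q] x) (T (T^[N + q] x))) / 2
                < ε' + δ
              rw [hTa, hTb]
              linarith
            · show max (dist (T^[N] x) (T (T^[N] x))) (dist (T^[N + q] x) (T (T^[N + q] x)))
                < ε' + δ
              rw [hTa, hTb]
              exact max_lt (by linarith) (by linarith)
            · show (dist (T^[N] x) (T (T^[N + q] x)) + dist (T (T^[N] x)) (T^[N + q] x)) / 2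
                < ε' + δ
              rw [hTa, hTb]
              have t1 : dist (T^[N] x) (T^[N + q + 1] x) ≤
                  dist (T^[N] x) (T^[N + q] x) + dist (T^[N + q] x) (T^[N + q + 1] x) :=
                dist_triangle _ _ _
              have t2 : dist (T^[N + 1] x) (T^[N + q] x) ≤
                  dist (T^[N + 1] x) (T^[N] x) + dist (T^[N] x) (T^[N + q] x) :=
                dist_triangle _ _ _
              have t3 : dist (T^[N + 1] x) (T^[N] x) = dist (T^[N] x) (T^[N + 1] x) :=
                dist_comm _ _
              linarith
          have hab_ne : T^[N] x ≠ T^[N + q] x := hadm N (N + q) (by omega)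
          have hab_R : R (T^[N] x) (T^[N + q] x) := hRq q hqspec N
          have hd1 : dist (T^[N + 1] x) (T^[N + q + 1] x) ≤ ε' := by
            rw [← hTa, ← hTb]
            by_cases hGc : G (T^[N] x) (T^[N + q] x) ≤ ε'
            · exact (hMK.1 _ _ hab_R hab_ne).le.trans hGc
            · push_neg at hGc
              exact hMK2 _ _ hab_R hab_ne hGc (by linarith)
          have hlast : dist (T^[N + q + 1] x) (T^[N + n] x) ≤ ((n - (q + 1) : ℕ) : ℝ) * c := by
            have h := hchain (N + q + 1) (by omega) (n - (q + 1))
            rwa [show N + q + 1 + (n - (q + 1)) = N + n by omega] at h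
          have hcast : ((n - (q + 1) : ℕ) : ℝ) ≤ (k:ℝ) - 1 := by
            have h1 : n - (q + 1) ≤ k - 1 := by omega
            have h2 : ((n - (q + 1) : ℕ) : ℝ) ≤ ((k - 1 : ℕ) : ℝ) := by exact_mod_cast h1
            rwa [Nat.cast_sub hk1, Nat.cast_one] at h2
          have hmul : ((n - (q + 1) : ℕ) : ℝ) * c ≤ ((k:ℝ) - 1) * c :=
            mul_le_mul_of_nonneg_right hcast hcpos.le
          have htri4 : dist (T^[N] x) (T^[N + n] x) ≤
              dist (T^[N] x) (T^[N + 1] x) + dist (T^[N + 1] x) (T^[N + q + 1] x) +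
                dist (T^[N + q + 1] x) (T^[N + n] x) := dist_triangle4 _ _ _ _
          nlinarith [hck]
      refine ⟨N, fun m hm n hn => ?_⟩
      have h1 : dist (T^[N] x) (T^[m] x) ≤ ε' + δ / 2 := by
        have h := main (m - N)
        rwa [show N + (m - N) = m by omega] at h
      have h2 : dist (T^[N] x) (T^[n] x) ≤ ε' + δ / 2 := by
        have h := main (n - N)
        rwa [show N + (n - N) = n by omega] at h
      have htri : dist (T^[m] x) (T^[n] x) ≤
          dist (T^[m] x) (T^[N] x) + dist (T^[N] x) (T^[n] x) := dist_triangle _ _ _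
      have hcm : dist (T^[m] x) (T^[N] x) = dist (T^[N] x) (T^[m] x) := dist_comm _ _
      have : ε' = ε / 4 := rfl
      linarith
    obtain ⟨l, hl⟩ := hcomp _ hR horb hcauchy
    have hTl := hcont _ l hR horb hl
    have h2 : Tendsto (fun n => T (T^[n] x)) atTop (nhds l) := by
      have e : (fun n => T (T^[n] x)) = fun n => T^[n + 1] x := by
        funext n
        exact (Function.iterate_succ_apply' T n x).symm
      rw [e]
      exact hl.comp (tendsto_add_atTop_nat 1)
    exact ⟨l, tendsto_nhds_unique hTl h2, hl⟩
  · -- uniqueness of related fixed points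
    intro z₁ z₂ h1 h2 hR12
    by_contra hne
    have hlt := hMK.1 z₁ z₂ hR12 hne
    have hup := hGup z₁ z₂
    have e1 : dist z₁ (T z₁) = 0 := by rw [h1, dist_self]
    have e2 : dist z₂ (T z₂) = 0 := by rw [h2, dist_self]
    have hA1 : A1 T z₁ z₂ = dist z₁ z₂ := rfl
    have hA2 : A2 T z₁ z₂ = 0 := by simp only [A2, e1, e2]; norm_num
    have hA3 : A3 T z₁ z₂ = 0 := by simp only [A3, e1, e2]; norm_num
    have hA4 : A4 T z₁ z₂ = dist z₁ z₂ := by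
      simp only [A4, h1, h2]
      ring
    have hle : G z₁ z₂ ≤ dist z₁ z₂ := by
      rw [hA1, hA2, hA3, hA4] at hup
      exact hup.trans (max_le le_rfl (max_le dist_nonneg (max_le dist_nonneg le_rfl)))
    rw [h1, h2] at hlt
    linarith

end Paper
end

section
/- Let (X,d) be a metric space, R a finitely semi-recurrent, non-identical relation on X, and T : X → X an R-semi-progressive, R-increasing selfmap which is Meir-Keeler (d,R;G)-contractive for some G ∈ 𝒢₁ = {A₁,B₂,B₄,C₁}. If X is (a-o,d)-complete and R is (a-o,d)-almost-selfclosed, then T is a globally strong Picard operator (modulo (d,R)): for each x ∈ X(T,R) the sequence (Tⁿx) converges to a fixed point of T, and any two fixed points z₁, z₂ of T with z₁ R z₂ coincide. -/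
open Filter Topology

namespace Paper

variable {X : Type*} [MetricSpace X]

/-- Any `G ∈ 𝒢₁` is squeezed between `A₁ = dist` and `C₁`. -/
lemma G_mem_bounds {X : Type*} [MetricSpace X] {T : X → X} {G : X → X → ℝ}
    (hG : G ∈ calG1 T) (x y : X) : dist x y ≤ G x y ∧ G x y ≤ C1 T x y := by
  simp only [calG1, Set.mem_insert_iff, Set.mem_singleton_iff] at hG
  rcases hG with rfl | rfl | rfl | rfl
  · exact ⟨le_refl _, le_max_left _ _⟩
  · exact ⟨le_max_left _ _, max_le_max le_rfl (le_max_left _ _)⟩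
  · exact ⟨le_max_left _ _, max_le_max le_rfl (le_max_right _ _)⟩
  · exact ⟨le_max_left _ _, le_rfl⟩

/-- Core Picard-iteration lemma. -/
lemma exists_fixedPoint_aux {X : Type*} [MetricSpace X]
    (R : X → X → Prop) (T : X → X)
    (hfsr : FinSemiRecurrent R T)
    (hinc : ∀ x y : X, R x y → R (T x) (T y))
    (hcomp : AOComplete R T)
    (G : X → X → ℝ)
    (hGlo : ∀ x y : X, dist x y ≤ G x y)
    (hGhi : ∀ x y : X, G x y ≤ C1 T x y)
    (hMK : MeirKeelerContractive R T G)
    (hasc : AlmostSelfClosed R T)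
    (x : X) (hx : R x (T x)) :
    ∃ z : X, T z = z ∧ Tendsto (fun n => T^[n] x) atTop (nhds z) := by
  have hstep' : ∀ n : ℕ, T (T^[n] x) = T^[n+1] x :=
    fun n => (Function.iterate_succ_apply' T n x).symm
  have hR : ∀ n : ℕ, R (T^[n] x) (T^[n+1] x) := by
    intro n
    induction n with
    | zero => simpa using hx
    | succ n ih =>
      have h2 := hinc _ _ ih
      rw [hstep' n, hstep' (n+1)] at h2
      exact h2
  have hRadd : ∀ q : ℕ, R x (T^[q] x) → ∀ m : ℕ, R (T^[m] x) (T^[m+q] x) := by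
    intro q hq m
    induction m with
    | zero => simpa using hq
    | succ m ih =>
      have h2 := hinc _ _ ih
      rw [hstep' m, hstep' (m+q)] at h2
      have he : m + 1 + q = m + q + 1 := by omega
      rw [he]
      exact h2
  by_cases hfix : ∃ m : ℕ, T^[m+1] x = T^[m] x
  · -- the orbit hits a fixed point
    obtain ⟨m, hm⟩ := hfix
    have hfixT : T (T^[m] x) = T^[m] x := (hstep' m).trans hm
    have hconst : ∀ n : ℕ, T^[m+n] x = T^[m] x := by
      intro n
      induction n with
      | zero => rfl
      | succ n ih =>
        calc T^[m+(n+1)] x = T (T^[m+n] x) := (hstep' (m+n)).symm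
          _ = T (T^[m] x) := by rw [ih]
          _ = T^[m] x := hfixT
    refine ⟨T^[m] x, hfixT, tendsto_atTop_of_eventually_const (i₀ := m) ?_⟩
    intro n hn
    have he : n = m + (n - m) := by omega
    rw [he, hconst]
  · -- all consecutive iterates are distinct
    push_neg at hfix
    have hne : ∀ n : ℕ, T^[n] x ≠ T^[n+1] x := fun n => (hfix n).symm
    -- the consecutive distances are strictly decreasing
    have hdec : ∀ n : ℕ,
        dist (T^[n+1] x) (T^[n+2] x) < dist (T^[n] x) (T^[n+1] x) := by
      intro n
      have h1 := hMK.1 _ _ (hR n) (hne n)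
      rw [hstep' n, hstep' (n+1)] at h1
      have h2 := hGhi (T^[n] x) (T^[n+1] x)
      simp only [C1, A1, A2, A4, hstep' n, hstep' (n+1), dist_self] at h2
      have htri := dist_triangle (T^[n] x) (T^[n+1] x) (T^[n+2] x)
      by_contra hge
      push_neg at hge
      have h3 : G (T^[n] x) (T^[n+1] x) ≤ dist (T^[n+1] x) (T^[n+2] x) := by
        refine le_trans h2 (max_le hge (max_le (by linarith) (by linarith)))
      linarith
    have hanti : StrictAnti (fun n => dist (T^[n] x) (T^[n+1] x)) :=
      strictAnti_nat_of_succ_lt hdec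
    have hGeq : ∀ n : ℕ,
        G (T^[n] x) (T^[n+1] x) = dist (T^[n] x) (T^[n+1] x) := by
      intro n
      refine le_antisymm ?_ (hGlo _ _)
      have h2 := hGhi (T^[n] x) (T^[n+1] x)
      simp only [C1, A1, A2, A4, hstep' n, hstep' (n+1), dist_self] at h2
      have htri := dist_triangle (T^[n] x) (T^[n+1] x) (T^[n+2] x)
      have hd := hdec n
      exact le_trans h2 (max_le le_rfl (max_le (by linarith) (by linarith)))
    have hbdd : BddBelow (Set.range (fun n => dist (T^[n] x) (T^[n+1] x))) := by
      refine ⟨0, fun y hy => ?_⟩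
      obtain ⟨n, rfl⟩ := hy
      exact dist_nonneg
    have htendL : Tendsto (fun n => dist (T^[n] x) (T^[n+1] x)) atTop
        (nhds (⨅ n, dist (T^[n] x) (T^[n+1] x))) :=
      tendsto_atTop_ciInf hanti.antitone hbdd
    have hL0 : 0 ≤ ⨅ n, dist (T^[n] x) (T^[n+1] x) :=
      le_ciInf fun n => dist_nonneg
    have hLlt : ∀ n : ℕ,
        (⨅ n, dist (T^[n] x) (T^[n+1] x)) < dist (T^[n] x) (T^[n+1] x) :=
      fun n => lt_of_le_of_lt (ciInf_le hbdd (n+1)) (hdec n)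
    have hLeq : (⨅ n, dist (T^[n] x) (T^[n+1] x)) = 0 := by
      by_contra hL
      have hLpos : 0 < ⨅ n, dist (T^[n] x) (T^[n+1] x) :=
        lt_of_le_of_ne hL0 (Ne.symm hL)
      obtain ⟨δ, hδpos, hδ2⟩ := hMK.2 _ hLpos
      obtain ⟨n, hn⟩ :=
        (htendL.eventually_lt_const (lt_add_of_pos_right _ hδpos)).exists
      have h1 : (⨅ n, dist (T^[n] x) (T^[n+1] x)) < G (T^[n] x) (T^[n+1] x) := by
        rw [hGeq n]; exact hLlt n
      have h2 : G (T^[n] x) (T^[n+1] x)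
          < (⨅ n, dist (T^[n] x) (T^[n+1] x)) + δ := by
        rw [hGeq n]; exact hn
      have h3 := hδ2 _ _ (hR n) (hne n) h1 h2
      rw [hstep' n, hstep' (n+1)] at h3
      exact absurd h3 (not_le.mpr (hLlt (n+1)))
    have htend0 : Tendsto (fun n => dist (T^[n] x) (T^[n+1] x)) atTop (nhds 0) := by
      rw [← hLeq]; exact htendL
    -- orbital admissibility
    have orbadm : OrbAdmissible T x := by
      have h : ∀ i j : ℕ, i < j → T^[i] x ≠ T^[j] x := by
        intro i j hij heq
        have h1 : T^[i+1] x = T^[j+1] x := by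
          rw [← hstep' i, ← hstep' j, heq]
        have h2 : dist (T^[i] x) (T^[i+1] x) = dist (T^[j] x) (T^[j+1] x) := by
          rw [heq, h1]
        have h3 : dist (T^[j] x) (T^[j+1] x) < dist (T^[i] x) (T^[i+1] x) :=
          hanti hij
        linarith
      intro i j hij
      rcases Nat.lt_or_ge i j with h' | h'
      · exact h i j h'
      · have hji : j < i := by omega
        exact fun heq => h j i hji heq.symm
    obtain ⟨k, hk1, hkrec⟩ := hfsr x hx orbadm
    -- Cauchy
    have hcauchy : CauchySeq (fun n => T^[n] x) := by
      rw [Metric.cauchySeq_iff']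
      intro ε' hε'
      have hε : 0 < ε' / 2 := by linarith
      obtain ⟨δ₀, hδ₀pos, hδ₀⟩ := hMK.2 (ε' / 2) hε
      set ε : ℝ := ε' / 2 with hεdef
      set δ : ℝ := min δ₀ ε with hδdef
      have hδpos : 0 < δ := lt_min hδ₀pos hε
      have hδle : δ ≤ ε := min_le_right _ _
      have hδMK : ∀ u v : X, R u v → u ≠ v → ε < G u v → G u v < ε + δ →
          dist (T u) (T v) ≤ ε := by
        intro u v h1 h2 h3 h4
        exact hδ₀ u v h1 h2 h3 (lt_of_lt_of_le h4 (by linarith [min_le_left δ₀ ε]))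
      set β : ℝ := δ / (4 * ((k : ℝ) + 1)) with hβdef
      have hk1' : (1 : ℝ) ≤ (k : ℝ) := by exact_mod_cast hk1
      have hβpos : 0 < β := by
        rw [hβdef]; positivity
      have hkβ : (k : ℝ) * β ≤ δ / 4 := by
        rw [hβdef, ← mul_div_assoc, div_le_div_iff₀ (by positivity) (by norm_num)]
        nlinarith
      have hββ : β ≤ δ / 4 := by nlinarith
      obtain ⟨N, hN⟩ := Metric.tendsto_atTop.mp htend0 β hβpos
      have hNρ : ∀ n : ℕ, N ≤ n → dist (T^[n] x) (T^[n+1] x) ≤ β := by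
        intro n hn
        have := hN n hn
        rw [Real.dist_eq, sub_zero, abs_of_nonneg dist_nonneg] at this
        linarith
      have hsmall : ∀ m : ℕ, N ≤ m → ∀ j : ℕ,
          dist (T^[m] x) (T^[m+j] x) ≤ (j : ℝ) * β := by
        intro m hm j
        induction j with
        | zero => simp
        | succ j ih =>
          have htri : dist (T^[m] x) (T^[m+(j+1)] x)
              ≤ dist (T^[m] x) (T^[m+j] x) + dist (T^[m+j] x) (T^[m+j+1] x) :=
            dist_triangle _ _ _
          have h2 : dist (T^[m+j] x) (T^[m+j+1] x) ≤ β := hNρ (m+j) (by omega)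
          have : ((j : ℝ) + 1) * β = (j : ℝ) * β + β := by ring
          push_cast
          linarith
      have key : ∀ j m : ℕ, N ≤ m → dist (T^[m] x) (T^[m+j] x) ≤ ε + δ / 2 := by
        intro j
        induction j using Nat.strong_induction_on with
        | _ j ih =>
          intro m hm
          by_cases hjk : j ≤ k
          · have h1 := hsmall m hm j
            have hjk' : (j : ℝ) ≤ (k : ℝ) := by exact_mod_cast hjk
            nlinarith
          · have hj1 : 1 ≤ j - 1 := by omega
            obtain ⟨q, hqspec, hqle, hqlt⟩ := hkrec (j-1) hj1
            obtain ⟨hq1, hqR⟩ := hqspec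
            have hr1 : 1 ≤ j - q := by omega
            have hrk : j - q ≤ k := by omega
            have hqj : q < j := by omega
            have Ruv : R (T^[m] x) (T^[m+q] x) := hRadd q hqR m
            have hneuv : T^[m] x ≠ T^[m+q] x := orbadm m (m+q) (by omega)
            have hD : dist (T^[m] x) (T^[m+q] x) ≤ ε + δ / 2 := ih q hqj m hm
            have hρm : dist (T^[m] x) (T^[m+1] x) ≤ β := hNρ m hm
            have hρmq : dist (T^[m+q] x) (T^[m+q+1] x) ≤ β := hNρ (m+q) (by omega)
            have hD0 : 0 ≤ dist (T^[m] x) (T^[m+q] x) := dist_nonneg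
            have hGub : G (T^[m] x) (T^[m+q] x)
                ≤ dist (T^[m] x) (T^[m+q] x) + β := by
              refine le_trans (hGhi _ _) ?_
              simp only [C1, A1, A2, A4, hstep' m, hstep' (m+q)]
              have t1 : dist (T^[m] x) (T^[m+q+1] x)
                  ≤ dist (T^[m] x) (T^[m+q] x) + dist (T^[m+q] x) (T^[m+q+1] x) :=
                dist_triangle _ _ _
              have t2 : dist (T^[m+1] x) (T^[m+q] x)
                  ≤ dist (T^[m+1] x) (T^[m] x) + dist (T^[m] x) (T^[m+q] x) :=
                dist_triangle _ _ _
              have t3 : dist (T^[m+1] x) (T^[m] x) = dist (T^[m] x) (T^[m+1] x) :=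
                dist_comm _ _
              exact max_le (by linarith)
                (max_le (by linarith) (by linarith))
            have hTuv : dist (T^[m+1] x) (T^[m+q+1] x) ≤ ε := by
              by_cases hcase : G (T^[m] x) (T^[m+q] x) ≤ ε
              · have := hMK.1 _ _ Ruv hneuv
                rw [hstep' m, hstep' (m+q)] at this
                linarith
              · push_neg at hcase
                have h4 : G (T^[m] x) (T^[m+q] x) < ε + δ := by linarith
                have := hδMK _ _ Ruv hneuv hcase h4
                rw [hstep' m, hstep' (m+q)] at this
                exact this
            have htail : dist (T^[m+q+1] x) (T^[m+q+1+(j-q-1)] x)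
                ≤ ((j - q - 1 : ℕ) : ℝ) * β := hsmall (m+q+1) (by omega) (j-q-1)
            have hidx : m + q + 1 + (j - q - 1) = m + j := by omega
            rw [hidx] at htail
            have htri1 : dist (T^[m] x) (T^[m+j] x)
                ≤ dist (T^[m] x) (T^[m+1] x) + dist (T^[m+1] x) (T^[m+q+1] x)
                  + dist (T^[m+q+1] x) (T^[m+j] x) :=
              dist_triangle4 _ _ _ _
            have hcast : ((j - q - 1 : ℕ) : ℝ) ≤ (k : ℝ) - 1 := by
              have : j - q - 1 ≤ k - 1 := by omega
              have h2 : ((j - q - 1 : ℕ) : ℝ) + 1 ≤ (k : ℝ) := by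
                exact_mod_cast (by omega : j - q - 1 + 1 ≤ k)
              linarith
            have hβ0 : 0 ≤ β := le_of_lt hβpos
            nlinarith [htail, htri1, hρm, hTuv, hcast, hkβ]
      obtain ⟨N, hN⟩ : ∃ N : ℕ, ∀ j m : ℕ, N ≤ m →
          dist (T^[m] x) (T^[m+j] x) ≤ ε + δ / 2 := ⟨N, fun j m hm => key j m hm⟩
      refine ⟨N, fun n hn => ?_⟩
      have he : n = N + (n - N) := by omega
      have h1 : dist (T^[N] x) (T^[n] x) ≤ ε + δ / 2 := by
        rw [he] at *
        exact hN (n - N) N le_rfl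
      rw [dist_comm]
      have : ε + δ / 2 < ε' := by
        rw [hεdef] at *
        linarith
      linarith
    -- limit exists
    have hOrb : Orbital T (fun n => T^[n] x) := ⟨x, id, tendsto_id, fun n => rfl⟩
    have hAsc : Ascending R (fun n => T^[n] x) := hR
    obtain ⟨z, hz⟩ := hcomp _ hAsc hOrb hcauchy
    obtain ⟨i, hi, hiR⟩ := hasc _ z hAsc hOrb hz
    refine ⟨z, ?_, hz⟩
    by_contra hTz
    have hzne : z ≠ T z := fun h => hTz h.symm
    have hc : 0 < dist z (T z) := dist_pos.mpr hzne
    have hdist : Tendsto (fun n => dist (T^[i n] x) z) atTop (nhds 0) :=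
      tendsto_iff_dist_tendsto_zero.mp (hz.comp hi)
    have hρi : Tendsto (fun n => dist (T^[i n] x) (T^[i n + 1] x)) atTop (nhds 0) :=
      htend0.comp hi
    have h8 : (0 : ℝ) < dist z (T z) / 8 := by linarith
    obtain ⟨n, hn1, hn2⟩ :=
      ((hdist.eventually_lt_const h8).and (hρi.eventually_lt_const h8)).exists
    have Ruz : R (T^[i n] x) z := hiR n
    have hnez : T^[i n] x ≠ z := by
      intro heq
      have h' : dist (T^[i n] x) (T^[i n + 1] x) = dist z (T z) := by
        rw [← hstep' (i n), heq]
      rw [h'] at hn2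
      linarith
    have hlt := hMK.1 _ _ Ruz hnez
    have hmaxle : C1 T (T^[i n] x) z ≤ 11 * dist z (T z) / 16 := by
      simp only [C1, A1, A2, A4, hstep' (i n)]
      have t1 : dist (T^[i n] x) (T z) ≤ dist (T^[i n] x) z + dist z (T z) :=
        dist_triangle _ _ _
      have t2 : dist (T^[i n + 1] x) z
          ≤ dist (T^[i n + 1] x) (T^[i n] x) + dist (T^[i n] x) z :=
        dist_triangle _ _ _
      have t3 : dist (T^[i n + 1] x) (T^[i n] x)
          = dist (T^[i n] x) (T^[i n + 1] x) := dist_comm _ _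
      exact max_le (by linarith) (max_le (by linarith) (by linarith))
    have t4 : dist z (T z) ≤ dist z (T^[i n + 1] x) + dist (T^[i n + 1] x) (T z) :=
      dist_triangle _ _ _
    have t5 : dist z (T^[i n + 1] x)
        ≤ dist z (T^[i n] x) + dist (T^[i n] x) (T^[i n + 1] x) :=
      dist_triangle _ _ _
    have t6 : dist z (T^[i n] x) = dist (T^[i n] x) z := dist_comm _ _
    rw [hstep' (i n)] at hlt
    have hGC := hGhi (T^[i n] x) z
    linarith

/-- main theorem, alternative (ii): `G ∈ 𝒢₁`, `X` `(a-o,d)`-complete,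
`R` `(a-o,d)`-almost-selfclosed. -/
theorem globally_strong_picard_selfclosed {X : Type*} [MetricSpace X]
    (R : X → X → Prop) (T : X → X)
    (hni : ∃ x y : X, R x y ∧ x ≠ y)
    (hfsr : FinSemiRecurrent R T)
    (hsp : ∃ x : X, R x (T x))
    (hinc : ∀ x y : X, R x y → R (T x) (T y))
    (hcomp : AOComplete R T)
    (G : X → X → ℝ) (hG : G ∈ calG1 T)
    (hMK : MeirKeelerContractive R T G)
    (hasc : AlmostSelfClosed R T) :
    (∀ x : X, R x (T x) →
      ∃ z : X, T z = z ∧ Tendsto (fun n => T^[n] x) atTop (nhds z)) ∧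
    (∀ z₁ z₂ : X, T z₁ = z₁ → T z₂ = z₂ → R z₁ z₂ → z₁ = z₂) := by
  have hGlo : ∀ x y : X, dist x y ≤ G x y := fun x y => (G_mem_bounds hG x y).1
  have hGhi : ∀ x y : X, G x y ≤ C1 T x y := fun x y => (G_mem_bounds hG x y).2
  constructor
  · intro x hx
    exact exists_fixedPoint_aux R T hfsr hinc hcomp G hGlo hGhi hMK hasc x hx
  · intro z₁ z₂ h1 h2 hR12
    by_contra hne
    have hlt := hMK.1 z₁ z₂ hR12 hne
    rw [h1, h2] at hlt
    have hup := hGhi z₁ z₂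
    have hC1 : C1 T z₁ z₂ ≤ dist z₁ z₂ := by
      simp only [C1, A1, A2, A4, h1, h2, dist_self]
      refine max_le le_rfl (max_le (by linarith [dist_nonneg (x := z₁) (y := z₂)]) (by linarith [dist_nonneg (x := z₁) (y := z₂)]))
    linarith

end Paper
end

section
/- Let (X,d) be a metric space, R a relation on X, T : X → X, and G ∈ 𝒢. If T is strictly (d,R;G)-nonexpansive (i.e., x R̃ y implies d(Tx,Ty) < G(x,y)), then for every x ∈ X with x R Tx and x ≠ Tx, one has G(x,Tx) = d(x,Tx). -/
open Filter Topology

namespace Paper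

variable {X : Type*} [MetricSpace X]

/-- if `T` is strictly `(d,R;G)`-nonexpansive then
`G(x,Tx) = d(x,Tx)` whenever `x R̃ Tx`. -/
theorem G_eq_dist_of_strictlyNonexpansive {X : Type*} [MetricSpace X]
    (R : X → X → Prop) (T : X → X) (G : X → X → ℝ) (hG : G ∈ calG T)
    (hstrict : StrictlyNonexpansive R T G) :
    ∀ x : X, R x (T x) → x ≠ T x → G x (T x) = dist x (T x) := by
  intro x hR hne
  set D := dist x (T x) with hD
  set E := dist (T x) (T (T x)) with hE
  have hEG : E < G x (T x) := hstrict x (T x) hR hne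
  have hA4 : A4 T x (T x) ≤ (D + E) / 2 := by
    have h1 : dist x (T (T x)) ≤ D + E := dist_triangle x (T x) (T (T x))
    simp only [A4, dist_self]
    linarith
  have hA2 : A2 T x (T x) = (D + E) / 2 := rfl
  have hA3 : A3 T x (T x) = max D E := rfl
  have hDE : (D + E) / 2 ≤ max D E := by
    rcases le_total D E with h | h
    · rw [max_eq_right h]; linarith
    · rw [max_eq_left h]; linarith
  -- in all cases: D ≤ G x (T x) and G x (T x) ≤ max D E
  have key : D ≤ G x (T x) ∧ G x (T x) ≤ max D E := by
    rcases hG with h | h | h | h | h | h <;> subst h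
    · exact ⟨le_refl _, le_max_left _ _⟩
    · refine ⟨le_max_left _ _, ?_⟩
      simp only [B2]
      exact max_le (le_max_left _ _) (by rw [hA2]; exact hDE)
    · refine ⟨le_max_left _ _, ?_⟩
      simp only [B3]
      exact max_le (le_max_left _ _) (by rw [hA3])
    · refine ⟨le_max_left _ _, ?_⟩
      simp only [B4]
      exact max_le (le_max_left _ _) (hA4.trans hDE)
    · refine ⟨le_max_left _ _, ?_⟩
      simp only [C1]
      exact max_le (le_max_left _ _)
        (max_le (by rw [hA2]; exact hDE) (hA4.trans hDE))
    · refine ⟨le_max_left _ _, ?_⟩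
      simp only [C2]
      exact max_le (le_max_left _ _)
        (max_le (by rw [hA3]) (hA4.trans hDE))
  obtain ⟨h1, h2⟩ := key
  have hmax : max D E = D := by
    rcases le_total E D with h | h
    · exact max_eq_left h
    · exfalso; rw [max_eq_right h] at h2; linarith
  rw [hmax] at h2
  exact le_antisymm h2 h1

end Paper
end

section
/- Let (X,d) be a metric space, R a relation on X, T : X → X an R-increasing map which is Meir-Keeler (d,R;G)-contractive for some G ∈ 𝒢, and x₀ ∈ X with x₀ R Tx₀. Set x_n := Tⁿx₀ and ρ_n := d(x_n, x_{n+1}), and assume x_n ≠ x_{n+1} for all n ≥ 0. Then the sequence (ρ_n)_{n≥0} is strictly decreasing and ρ_n → 0 as n → ∞. -/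
open Filter Topology

namespace Paper

variable {X : Type*} [MetricSpace X]

lemma G_le_max' {X : Type*} [MetricSpace X] {T : X → X} {G : X → X → ℝ}
    (hG : G ∈ calG T) (x : X) :
    G x (T x) ≤ max (dist x (T x)) (dist (T x) (T (T x))) := by
  set ρ := dist x (T x) with hρdef
  set ρ' := dist (T x) (T (T x)) with hρ'def
  have hm1 : ρ ≤ max ρ ρ' := le_max_left _ _
  have hm2 : ρ' ≤ max ρ ρ' := le_max_right _ _
  have hA1 : A1 T x (T x) ≤ max ρ ρ' := hm1
  have hA2 : A2 T x (T x) ≤ max ρ ρ' := by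
    simp only [A2, ← hρdef, ← hρ'def]; linarith
  have hA3 : A3 T x (T x) ≤ max ρ ρ' := le_rfl
  have hA4 : A4 T x (T x) ≤ max ρ ρ' := by
    simp only [A4]
    have ht : dist x (T (T x)) ≤ ρ + ρ' := dist_triangle _ _ _
    have hz : dist (T x) (T x) = 0 := dist_self _
    rw [hz]
    linarith
  simp only [calG, Set.mem_insert_iff, Set.mem_singleton_iff] at hG
  rcases hG with rfl | rfl | rfl | rfl | rfl | rfl
  · exact hA1
  · exact max_le hA1 hA2
  · exact max_le hA1 hA3
  · exact max_le hA1 hA4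
  · exact max_le hA1 (max_le hA2 hA4)
  · exact max_le hA1 (max_le hA3 hA4)

/-- `ρ_n = d(x_n, x_{n+1})` is strictly decreasing and converges to `0`. -/
theorem rho_strictAnti_tendsto_zero {X : Type*} [MetricSpace X]
    (R : X → X → Prop) (T : X → X)
    (hinc : ∀ x y : X, R x y → R (T x) (T y))
    (G : X → X → ℝ) (hG : G ∈ calG T)
    (hMK : MeirKeelerContractive R T G)
    (x₀ : X) (hx₀ : R x₀ (T x₀))
    (hne : ∀ n : ℕ, T^[n] x₀ ≠ T^[n + 1] x₀)
 :
    StrictAnti (fun n : ℕ => dist (T^[n] x₀) (T^[n + 1] x₀)) ∧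
    Tendsto (fun n : ℕ => dist (T^[n] x₀) (T^[n + 1] x₀)) atTop (nhds 0) := by
  set ρ : ℕ → ℝ := fun n => dist (T^[n] x₀) (T^[n + 1] x₀) with hρ
  have hR : ∀ n, R (T^[n] x₀) (T^[n + 1] x₀) := by
    intro n
    induction n with
    | zero => simpa using hx₀
    | succ n ih =>
      have h := hinc _ _ ih
      simpa [Function.iterate_succ_apply'] using h
  have key : ∀ n, ρ (n + 1) < G (T^[n] x₀) (T^[n + 1] x₀) ∧
      G (T^[n] x₀) (T^[n + 1] x₀) ≤ ρ n := by
    intro n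
    have e1 : T (T^[n] x₀) = T^[n + 1] x₀ := (Function.iterate_succ_apply' T n x₀).symm
    have e2 : T (T^[n + 1] x₀) = T^[n + 2] x₀ := (Function.iterate_succ_apply' T (n + 1) x₀).symm
    have hGle := G_le_max' hG (T^[n] x₀)
    rw [e1, e2] at hGle
    have hst := hMK.1 _ _ (hR n) (hne n)
    rw [e1, e2] at hst
    have hρ1 : ρ (n + 1) = dist (T^[n + 1] x₀) (T^[n + 2] x₀) := rfl
    rw [← hρ1] at hGle hst
    have hG2 : G (T^[n] x₀) (T^[n + 1] x₀) ≤ ρ n := by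
      rcases le_or_gt (ρ (n + 1)) (ρ n) with h | h
      · rwa [max_eq_left h] at hGle
      · rw [max_eq_right h.le] at hGle; linarith
    exact ⟨hst, hG2⟩
  have hSA : StrictAnti ρ := strictAnti_nat_of_succ_lt fun n =>
    lt_of_lt_of_le (key n).1 (key n).2
  have hbdd : BddBelow (Set.range ρ) := ⟨0, by rintro x ⟨n, rfl⟩; exact dist_nonneg⟩
  have htend : Tendsto ρ atTop (nhds (⨅ n, ρ n)) :=
    tendsto_atTop_ciInf hSA.antitone hbdd
  have hεnn : 0 ≤ ⨅ n, ρ n := le_ciInf fun n => dist_nonneg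
  have hlow : ∀ m, (⨅ n, ρ n) ≤ ρ m := fun m => ciInf_le hbdd m
  have hε0 : (⨅ n, ρ n) = 0 := by
    by_contra h
    have hpos : 0 < ⨅ n, ρ n := lt_of_le_of_ne hεnn (Ne.symm h)
    obtain ⟨δ, hδ, hMKP⟩ := hMK.2 _ hpos
    obtain ⟨n, hn⟩ := (htend.eventually (gt_mem_nhds
      (show (⨅ n, ρ n) < (⨅ n, ρ n) + δ by linarith))).exists
    have h1 : (⨅ m, ρ m) < G (T^[n] x₀) (T^[n + 1] x₀) :=
      lt_of_le_of_lt (hlow (n + 1)) (key n).1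
    have h2 : G (T^[n] x₀) (T^[n + 1] x₀) < (⨅ m, ρ m) + δ :=
      lt_of_le_of_lt (key n).2 hn
    have hle := hMKP _ _ (hR n) (hne n) h1 h2
    have e1 : T (T^[n] x₀) = T^[n + 1] x₀ := (Function.iterate_succ_apply' T n x₀).symm
    have e2 : T (T^[n + 1] x₀) = T^[n + 2] x₀ := (Function.iterate_succ_apply' T (n + 1) x₀).symm
    rw [e1, e2] at hle
    have : (⨅ m, ρ m) < ρ (n + 1) := lt_of_le_of_lt (hlow (n + 2)) (hSA (by omega : n + 1 < n + 2))
    exact absurd hle (not_le.mpr this)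
  rw [hε0] at htend
  exact ⟨hSA, htend⟩

end Paper
end

section
/- Let (X,d) be a metric space, R a relation on X, T : X → X an R-increasing map which is Meir-Keeler (d,R;G)-contractive for some G ∈ 𝒢, and x₀ ∈ X with x₀ R Tx₀. Set x_n := Tⁿx₀ and assume x_n ≠ x_{n+1} for all n ≥ 0. Then the map n ↦ x_n is injective: i ≠ j implies x_i ≠ x_j. -/
open Filter Topology

namespace Paper

variable {X : Type*} [MetricSpace X]

/-! On a pair `(x, Tx)` every `G ∈ 𝒢` is at most `max (d(x,Tx), d(Tx,T²x))` (for `A₄` by the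
triangle inequality), so strict contractivity along the `R`-ascending orbit makes the displacements
`d(xₙ, xₙ₊₁)` strictly decreasing. As `xₙ` determines its displacement, `xᵢ = xⱼ` with `i ≠ j`
would make two of them equal. -/

theorem le_max_dist_of_mem_calG {T : X → X} {G : X → X → ℝ} (hG : G ∈ calG T) (x : X) :
    G x (T x) ≤ max (dist x (T x)) (dist (T x) (T (T x))) := by
  set m := max (dist x (T x)) (dist (T x) (T (T x)))
  have hleft : dist x (T x) ≤ m := le_max_left _ _
  have hright : dist (T x) (T (T x)) ≤ m := le_max_right _ _
  have hA1 : A1 T x (T x) ≤ m := hleft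
  have hA2 : A2 T x (T x) ≤ m := by unfold A2; linarith
  have hA3 : A3 T x (T x) ≤ m := le_rfl
  have hA4 : A4 T x (T x) ≤ m := by
    unfold A4
    rw [dist_self]
    linarith [dist_triangle x (T x) (T (T x))]
  rcases hG with rfl | rfl | rfl | rfl | rfl | rfl
  · exact hA1
  · exact max_le hA1 hA2
  · exact max_le hA1 hA3
  · exact max_le hA1 hA4
  · exact max_le hA1 (max_le hA2 hA4)
  · exact max_le hA1 (max_le hA3 hA4)

theorem StrictlyNonexpansive.dist_apply_lt {R : X → X → Prop} {T : X → X} {G : X → X → ℝ}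
    (hT : StrictlyNonexpansive R T G) (hG : G ∈ calG T) {x : X} (hR : R x (T x))
    (hx : x ≠ T x) : dist (T x) (T (T x)) < dist x (T x) := by
  have h := (hT x (T x) hR hx).trans_le (le_max_dist_of_mem_calG hG x)
  exact (lt_max_iff.mp h).resolve_right (lt_irrefl _)

theorem rel_iterate_apply {α : Type*} {R : α → α → Prop} {T : α → α}
    (hinc : ∀ x y, R x y → R (T x) (T y)) {x : α} (hx : R x (T x)) (n : ℕ) :
    R (T^[n] x) (T (T^[n] x)) := by
  induction n with
  | zero => exact hx
  | succ n ih =>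
    rw [Function.iterate_succ_apply']
    exact hinc _ _ ih

theorem strictAnti_dist_iterate_apply {R : X → X → Prop} {T : X → X} {G : X → X → ℝ}
    (hinc : ∀ x y, R x y → R (T x) (T y)) (hT : StrictlyNonexpansive R T G) (hG : G ∈ calG T)
    {x : X} (hx : R x (T x)) (hne : ∀ n : ℕ, T^[n] x ≠ T^[n + 1] x) :
    StrictAnti fun n => dist (T^[n] x) (T (T^[n] x)) :=
  strictAnti_nat_of_succ_lt fun n => by
    have hne' : T^[n] x ≠ T (T^[n] x) := by rw [← Function.iterate_succ_apply' T]; exact hne n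
    rw [Function.iterate_succ_apply']
    exact hT.dist_apply_lt hG (rel_iterate_apply hinc hx n) hne'

/-- the map `n ↦ Tⁿx₀` is injective. -/
theorem orbit_injective {X : Type*} [MetricSpace X]
    (R : X → X → Prop) (T : X → X)
    (hinc : ∀ x y : X, R x y → R (T x) (T y))
    (G : X → X → ℝ) (hG : G ∈ calG T)
    (hMK : MeirKeelerContractive R T G)
    (x₀ : X) (hx₀ : R x₀ (T x₀))
    (hne : ∀ n : ℕ, T^[n] x₀ ≠ T^[n + 1] x₀)
 :
    Function.Injective (fun n : ℕ => T^[n] x₀) :=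
  Function.Injective.of_comp (f := fun y => dist y (T y))
    (strictAnti_dist_iterate_apply hinc hMK.1 hG hx₀ hne).injective

end Paper
end

section
/- Let (X,d) be a metric space, R a finitely semi-recurrent, non-identical relation on X, and T : X → X an R-semi-progressive, R-increasing selfmap which is (d,R;G,φ)-contractive for some G ∈ 𝒢 and some Meir-Keeler admissible function φ ∈ F(re)(ℝ₊). If X is (a-o,d)-complete and T is (a-o,d)-continuous, then T is a globally strong Picard operator (modulo (d,R)): for each x ∈ X(T,R) the sequence (Tⁿx) converges to a fixed point of T, and any two fixed points z₁, z₂ of T with z₁ R z₂ coincide. -/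
open Filter Topology

namespace Paper

variable {X : Type*} [MetricSpace X]

section AuxPicard

variable {X : Type*} [MetricSpace X]

lemma aux_calG_bounds {T : X → X} {G : X → X → ℝ} (hG : G ∈ calG T) (x y : X) :
    dist x y ≤ G x y ∧
    G x y ≤ max (A1 T x y) (max (A2 T x y) (max (A3 T x y) (A4 T x y))) := by
  have h1 : A1 T x y ≤ max (A1 T x y) (max (A2 T x y) (max (A3 T x y) (A4 T x y))) :=
    le_max_left _ _
  have h2 : A2 T x y ≤ max (A1 T x y) (max (A2 T x y) (max (A3 T x y) (A4 T x y))) :=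
    le_max_of_le_right (le_max_left _ _)
  have h3 : A3 T x y ≤ max (A1 T x y) (max (A2 T x y) (max (A3 T x y) (A4 T x y))) :=
    le_max_of_le_right (le_max_of_le_right (le_max_left _ _))
  have h4 : A4 T x y ≤ max (A1 T x y) (max (A2 T x y) (max (A3 T x y) (A4 T x y))) :=
    le_max_of_le_right (le_max_of_le_right (le_max_right _ _))
  simp only [calG, Set.mem_insert_iff, Set.mem_singleton_iff] at hG
  rcases hG with rfl | rfl | rfl | rfl | rfl | rfl
  · exact ⟨le_rfl, h1⟩
  · exact ⟨le_max_left _ _, max_le h1 h2⟩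
  · exact ⟨le_max_left _ _, max_le h1 h3⟩
  · exact ⟨le_max_left _ _, max_le h1 h4⟩
  · exact ⟨le_max_left _ _, max_le h1 (max_le h2 h4)⟩
  · exact ⟨le_max_left _ _, max_le h1 (max_le h3 h4)⟩

lemma aux_step {R : X → X → Prop} {T : X → X} {G : X → X → ℝ} {φ : ℝ → ℝ}
    (hG : G ∈ calG T) (hφ : Regressive φ) (hcontr : PhiContractive R T G φ)
    {u : X} (hR : R u (T u)) (hne : u ≠ T u) :
    dist (T u) (T (T u)) ≤ φ (dist u (T u)) := by
  set a := dist u (T u) with ha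
  set b := dist (T u) (T (T u)) with hb
  have ha0 : 0 < a := dist_pos.2 hne
  have hb0 : 0 ≤ b := dist_nonneg
  have hbc : b ≤ φ (G u (T u)) := hcontr u (T u) hR hne
  obtain ⟨hlow, hup⟩ := aux_calG_bounds hG u (T u)
  have htri : dist u (T (T u)) ≤ a + b := dist_triangle u (T u) (T (T u))
  have hup2 : G u (T u) ≤ max a b := by
    refine hup.trans (max_le (le_max_left _ _) (max_le ?_ (max_le ?_ ?_)))
    · simp only [A2, ← ha, ← hb]
      rcases le_total a b with h | h
      · calc (a+b)/2 ≤ (b+b)/2 := by linarith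
          _ = b := by ring
          _ ≤ _ := le_max_right _ _
      · calc (a+b)/2 ≤ (a+a)/2 := by linarith
          _ = a := by ring
          _ ≤ _ := le_max_left _ _
    · simp only [A3, ← ha, ← hb]; exact le_rfl
    · simp only [A4, dist_self, ← ha, ← hb]
      rcases le_total a b with h | h
      · calc (dist u (T (T u)) + 0)/2 ≤ (a+b+0)/2 := by linarith
          _ ≤ b := by linarith
          _ ≤ _ := le_max_right _ _
      · calc (dist u (T (T u)) + 0)/2 ≤ (a+b+0)/2 := by linarith
          _ ≤ a := by linarith
          _ ≤ _ := le_max_left _ _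
  rcases le_total b a with hab | hab
  · have : G u (T u) = a := le_antisymm (hup2.trans (by simp [max_eq_left hab])) hlow
    rwa [this] at hbc
  · have hG0 : 0 < G u (T u) := lt_of_lt_of_le ha0 hlow
    have := hφ.2.2 _ hG0
    have h2 : G u (T u) ≤ b := hup2.trans (by simp [max_eq_right hab])
    linarith

omit [MetricSpace X] in
lemma aux_iter_rel {R : X → X → Prop} {T : X → X}
    (hinc : ∀ x y : X, R x y → R (T x) (T y)) {u v : X} (h : R u v) :
    ∀ n, R (T^[n] u) (T^[n] v) := by
  intro n; induction n with
  | zero => simpa using h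
  | succ n ih =>
      rw [Function.iterate_succ_apply', Function.iterate_succ_apply']
      exact hinc _ _ ih

end AuxPicard

/-- Theorem 4, alternative (j1): `T` `(d,R;G,φ)`-contractive for a
Meir-Keeler admissible `φ`, `X` `(a-o,d)`-complete, `T` `(a-o,d)`-continuous. -/
theorem globally_strong_picard_phi_continuous {X : Type*} [MetricSpace X]
    (R : X → X → Prop) (T : X → X)
    (hni : ∃ x y : X, R x y ∧ x ≠ y)
    (hfsr : FinSemiRecurrent R T)
    (hsp : ∃ x : X, R x (T x))
    (hinc : ∀ x y : X, R x y → R (T x) (T y))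
    (hcomp : AOComplete R T)
    (G : X → X → ℝ) (hG : G ∈ calG T)
    (φ : ℝ → ℝ) (hφ : Regressive φ) (hadm : MKAdmissible φ)
    (hcontr : PhiContractive R T G φ)
    (hcont : AOContinuous R T) :
    (∀ x : X, R x (T x) →
      ∃ z : X, T z = z ∧ Tendsto (fun n => T^[n] x) atTop (nhds z)) ∧
    (∀ z₁ z₂ : X, T z₁ = z₁ → T z₂ = z₂ → R z₁ z₂ → z₁ = z₂) := by
  constructor
  · intro x hRx
    set xs : ℕ → X := fun n => T^[n] x with hxs
    have hx1 : ∀ n, xs (n+1) = T (xs n) := fun n => Function.iterate_succ_apply' T n x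
    have hasc : Ascending R xs := by
      intro n
      have h := aux_iter_rel hinc hRx n
      show R (T^[n] x) (T^[n+1] x)
      rwa [Function.iterate_succ_apply]
    have horb : Orbital T xs := ⟨x, id, tendsto_id, fun n => rfl⟩
    by_cases hfix : ∃ n, T (T^[n] x) = T^[n] x
    · obtain ⟨n0, hn0⟩ := hfix
      refine ⟨T^[n0] x, hn0, ?_⟩
      apply tendsto_atTop_of_eventually_const (i₀ := n0)
      intro m hm
      induction m, hm using Nat.le_induction with
      | base => rfl
      | succ m hm ih => rw [hx1 m, ih]; exact hn0
    · push_neg at hfix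
      have hne : ∀ n, xs n ≠ xs (n+1) := by
        intro n h
        have h2 : T^[n+1] x = T^[n] x := h.symm
        rw [Function.iterate_succ_apply'] at h2
        exact hfix n h2
      set ρ : ℕ → ℝ := fun n => dist (xs n) (xs (n+1)) with hρdef
      have hρpos : ∀ n, 0 < ρ n := fun n => dist_pos.2 (hne n)
      have hρstep : ∀ n, ρ (n+1) ≤ φ (ρ n) := by
        intro n
        have hR' : R (xs n) (T (xs n)) := by rw [← hx1 n]; exact hasc n
        have hne' : xs n ≠ T (xs n) := by rw [← hx1 n]; exact hne n
        have h := aux_step hG hφ hcontr hR' hne'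
        show dist (xs (n+1)) (xs (n+1+1)) ≤ φ (dist (xs n) (xs (n+1)))
        rw [hx1 (n+1), hx1 n]
        exact h
      have hanti : StrictAnti ρ :=
        strictAnti_nat_of_succ_lt fun n => (hρstep n).trans_lt (hφ.2.2 _ (hρpos n))
      have hoa : OrbAdmissible T x := by
        have key : ∀ i j, i < j → T^[i] x = T^[j] x → False := by
          intro i j hlt h
          have hlt' : ρ j < ρ i := hanti hlt
          have e : ρ i = ρ j := by
            show dist (xs i) (xs (i+1)) = dist (xs j) (xs (j+1))
            rw [hx1 i, hx1 j]
            show dist (T^[i] x) (T (T^[i] x)) = dist (T^[j] x) (T (T^[j] x))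
            rw [h]
          linarith
        intro i j hij h
        rcases hij.lt_or_gt with hlt | hlt
        · exact key i j hlt h
        · exact key j i hlt h.symm
      obtain ⟨k, hk1, hkrec⟩ := hfsr x hRx hoa
      have hbdd : BddBelow (Set.range ρ) := ⟨0, by rintro y ⟨n, rfl⟩; exact dist_nonneg⟩
      have hlim : Tendsto ρ atTop (nhds (⨅ n, ρ n)) := tendsto_atTop_ciInf hanti.antitone hbdd
      have hinf0 : (⨅ n, ρ n) = 0 := by
        by_contra hc
        have hc0 : 0 ≤ ⨅ n, ρ n := le_ciInf fun n => dist_nonneg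
        have hcpos : 0 < ⨅ n, ρ n := lt_of_le_of_ne hc0 (Ne.symm hc)
        obtain ⟨β, hβ0, hβlt, hβ⟩ := hadm _ hcpos
        obtain ⟨n, hn⟩ :=
          (hlim.eventually_lt_const (by linarith : (⨅ n, ρ n) < (⨅ n, ρ n) + β)).exists
        have h1 : (⨅ m, ρ m) ≤ ρ n := ciInf_le hbdd n
        have h2 : ρ (n+1) ≤ φ (ρ n) := hρstep n
        have h3 : φ (ρ n) ≤ ⨅ m, ρ m := hβ _ h1 hn
        have h4 : (⨅ m, ρ m) ≤ ρ (n+2) := ciInf_le hbdd (n+2)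
        have h5 : ρ (n+2) < ρ (n+1) := hanti (by omega)
        linarith
      rw [hinf0] at hlim
      have hCauchy : CauchySeq xs := by
        rw [Metric.cauchySeq_iff']
        intro ε hε
        obtain ⟨β, hβ0, hβlt, hβ⟩ := hadm (ε/2) (by linarith)
        have hk0 : (0:ℝ) < (k:ℝ) := by exact_mod_cast hk1
        have hk1' : (1:ℝ) ≤ (k:ℝ) := by exact_mod_cast hk1
        set δ := β / (2*(k:ℝ)) with hδdef
        have hδ0 : 0 < δ := by positivity
        have hδβ : δ ≤ β/2 := by
          rw [hδdef]
          apply div_le_div_of_nonneg_left hβ0.le (by norm_num)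
          linarith
        have hkδ : (k:ℝ) * δ = β/2 := by
          rw [hδdef]
          field_simp
        obtain ⟨N, hN⟩ := eventually_atTop.1 (hlim.eventually_lt_const hδ0)
        have tele : ∀ b a, N ≤ a → dist (xs a) (xs (a+b)) ≤ (b:ℝ) * δ := by
          intro b
          induction b with
          | zero => intro a ha; simp
          | succ b ih =>
            intro a ha
            have h1 := ih a ha
            have h2 : dist (xs (a+b)) (xs (a+b+1)) < δ := hN (a+b) (by omega)
            have htri : dist (xs a) (xs (a+(b+1))) ≤
                dist (xs a) (xs (a+b)) + dist (xs (a+b)) (xs (a+b+1)) :=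
              dist_triangle _ _ _
            have : dist (xs a) (xs (a+(b+1))) ≤ (b:ℝ) * δ + δ := by linarith
            calc dist (xs a) (xs (a+(b+1))) ≤ (b:ℝ) * δ + δ := this
              _ = ((b+1 : ℕ):ℝ) * δ := by push_cast; ring
        have key : ∀ m n, N ≤ n → dist (xs n) (xs (n+m)) ≤ ε/2 + β/2 := by
          intro m
          induction m using Nat.strong_induction_on with
          | _ m IH =>
            rcases m with _ | _ | m
            · intro n hn
              simp only [Nat.add_zero, dist_self]
              positivity
            · intro n hn
              have h := hN n hn
              have h' : dist (xs n) (xs (n+1)) < δ := h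
              linarith
            · intro n hn
              obtain ⟨q, hqspec, hqle, hqlt⟩ := hkrec (m+1) (by omega)
              obtain ⟨hq1, hRq⟩ := hqspec
              have hRnq : R (xs n) (xs (n+q)) := by
                have h := aux_iter_rel hinc hRq n
                show R (T^[n] x) (T^[n+q] x)
                rwa [Function.iterate_add_apply]
              have hneq : xs n ≠ xs (n+q) := hoa n (n+q) (by omega)
              have hA1d : dist (xs n) (xs (n+q)) ≤ ε/2 + β/2 := IH q (by omega) n hn
              have d1 : dist (xs n) (xs (n+1)) < δ := hN n hn
              have d2 : dist (xs (n+q)) (xs (n+q+1)) < δ := hN (n+q) (by omega)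
              obtain ⟨hlow, hup⟩ := aux_calG_bounds hG (xs n) (xs (n+q))
              have hTn : T (xs n) = xs (n+1) := (hx1 n).symm
              have hTnq : T (xs (n+q)) = xs (n+q+1) := (hx1 (n+q)).symm
              have hGlt : G (xs n) (xs (n+q)) < ε/2 + β := by
                refine lt_of_le_of_lt hup ?_
                have t1 : dist (xs n) (xs (n+q+1)) ≤
                    dist (xs n) (xs (n+q)) + dist (xs (n+q)) (xs (n+q+1)) := dist_triangle _ _ _
                have t2 : dist (xs (n+1)) (xs (n+q)) ≤
                    dist (xs (n+1)) (xs n) + dist (xs n) (xs (n+q)) := dist_triangle _ _ _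
                have t3 : dist (xs (n+1)) (xs n) = dist (xs n) (xs (n+1)) := dist_comm _ _
                simp only [A1, A2, A3, A4, hTn, hTnq]
                apply max_lt ?_ (max_lt ?_ (max_lt (max_lt ?_ ?_) ?_))
                · linarith
                · linarith
                · linarith
                · linarith
                · linarith
              have hG0 : 0 < G (xs n) (xs (n+q)) := lt_of_lt_of_le (dist_pos.2 hneq) hlow
              have hstep : dist (xs (n+1)) (xs (n+q+1)) ≤ ε/2 := by
                have hc := hcontr _ _ hRnq hneq
                rw [hTn, hTnq] at hc
                rcases le_or_gt (ε/2) (G (xs n) (xs (n+q))) with hge | hlt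
                · exact hc.trans (hβ _ hge hGlt)
                · exact hc.trans ((hφ.2.2 _ hG0).le.trans hlt.le)
              have htail : dist (xs (n+q+1)) (xs (n+(m+2))) ≤ ((m+1-q : ℕ):ℝ) * δ := by
                have h := tele (m+1-q) (n+q+1) (by omega)
                have e : (n+q+1) + (m+1-q) = n+(m+2) := by omega
                rwa [e] at h
              have hcast : ((m+1-q : ℕ):ℝ) ≤ (k:ℝ) - 1 := by
                have h9 : (m+1-q) + 1 ≤ k := by omega
                have h10 : ((m+1-q : ℕ):ℝ) + 1 ≤ (k:ℝ) := by exact_mod_cast h9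
                linarith
              have htri := dist_triangle4 (xs n) (xs (n+1)) (xs (n+q+1)) (xs (n+(m+2)))
              have hmul : ((m+1-q : ℕ):ℝ) * δ ≤ ((k:ℝ)-1) * δ :=
                mul_le_mul_of_nonneg_right hcast hδ0.le
              have : dist (xs n) (xs (n+(m+1+1))) ≤ ε/2 + β/2 := by nlinarith [hkδ]
              exact this
        refine ⟨N, fun n hn => ?_⟩
        have h := key (n - N) N le_rfl
        rw [Nat.add_sub_cancel' hn] at h
        rw [dist_comm]
        calc dist (xs N) (xs n) ≤ ε/2 + β/2 := h
          _ < ε := by linarith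
      obtain ⟨l, hl⟩ := hcomp xs hasc horb hCauchy
      have hTl := hcont xs l hasc horb hl
      have h2 : Tendsto (fun n => xs (n+1)) atTop (nhds l) := hl.comp (tendsto_add_atTop_nat 1)
      have h3 : Tendsto (fun n => T (xs n)) atTop (nhds l) := h2.congr fun n => hx1 n
      exact ⟨l, tendsto_nhds_unique hTl h3, hl⟩
  · intro z₁ z₂ h1 h2 hR12
    by_contra hne
    have hd : 0 < dist z₁ z₂ := dist_pos.2 hne
    have hc := hcontr _ _ hR12 hne
    rw [h1, h2] at hc
    obtain ⟨hlow, hup⟩ := aux_calG_bounds hG z₁ z₂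
    have hup' : G z₁ z₂ ≤ dist z₁ z₂ := by
      refine hup.trans ?_
      simp only [A1, A2, A3, A4, h1, h2, dist_self]
      apply max_le le_rfl (max_le ?_ (max_le ?_ ?_))
      · linarith
      · simp only [max_self]; linarith
      · linarith
    have hφlt : φ (G z₁ z₂) < G z₁ z₂ := hφ.2.2 _ (lt_of_lt_of_le hd hlow)
    linarith


end Paper
end
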